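/- The quotient topological space X = Γ\G of the Heisenberg group G by the left-multiplication action of Γ is Hausdorff (T2). -/

import Mathlib

open Matrix Complex

/-- The Heisenberg matrix with rows (1,z₁,z₃), (0,1,z₂), (0,0,1). -/
def M (z₁ z₂ z₃ : ℂ) : Matrix (Fin 3) (Fin 3) ℂ :=
  !![1, z₁, z₃; 0, 1, z₂; 0, 0, 1]

lemma M_mul (a₁ a₂ a₃ b₁ b₂ b₃ : ℂ) :
    M a₁ a₂ a₃ * M b₁ b₂ b₃ = M (a₁ + b₁) (a₂ + b₂) (a₃ + b₃ + a₁ * b₂) := by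
  ext i j
  fin_cases i <;> fin_cases j <;>
    simp [M, Matrix.mul_apply, Fin.sum_univ_succ, Matrix.vecHead, Matrix.vecTail] <;> ring

lemma M_one : M 0 0 0 = 1 := by
  ext i j
  fin_cases i <;> fin_cases j <;>
    simp [M, Matrix.one_apply, Matrix.vecHead, Matrix.vecTail]

lemma M_inj : Function.Injective fun p : ℂ × ℂ × ℂ => M p.1 p.2.1 p.2.2 := by
  rintro ⟨a₁, a₂, a₃⟩ ⟨b₁, b₂, b₃⟩ h
  have h1 := congrFun (congrFun h 0) 1
  have h2 := congrFun (congrFun h 1) 2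
  have h3 := congrFun (congrFun h 0) 2
  simp [M, Matrix.vecHead, Matrix.vecTail] at h1 h2 h3
  simp [h1, h2, h3]

/-- `z ∈ ℤ[i]`, i.e. `z` is a Gaussian integer viewed inside `ℂ`. -/
def IsGaussInt (z : ℂ) : Prop := ∃ a b : ℤ, z = (a : ℂ) + (b : ℂ) * Complex.I

lemma gauss_zero : IsGaussInt 0 := ⟨0, 0, by norm_num⟩

lemma gauss_neg {z : ℂ} (h : IsGaussInt z) : IsGaussInt (-z) := by
  obtain ⟨a, b, rfl⟩ := h; exact ⟨-a, -b, by push_cast; ring⟩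

lemma gauss_add {z w : ℂ} (hz : IsGaussInt z) (hw : IsGaussInt w) : IsGaussInt (z + w) := by
  obtain ⟨a, b, rfl⟩ := hz; obtain ⟨c, d, rfl⟩ := hw
  exact ⟨a + c, b + d, by push_cast; ring⟩

lemma gauss_mul {z w : ℂ} (hz : IsGaussInt z) (hw : IsGaussInt w) : IsGaussInt (z * w) := by
  obtain ⟨a, b, rfl⟩ := hz; obtain ⟨c, d, rfl⟩ := hw
  exact ⟨a * c - b * d, a * d + b * c, by push_cast; ring_nf; rw [Complex.I_sq]; ring⟩

lemma gauss_sub {z w : ℂ} (hz : IsGaussInt z) (hw : IsGaussInt w) : IsGaussInt (z - w) := by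
  simpa [sub_eq_add_neg] using gauss_add hz (gauss_neg hw)

/-- The Heisenberg group `G` as a set of matrices. -/
def heisSet : Set (Matrix (Fin 3) (Fin 3) ℂ) := {A | ∃ z₁ z₂ z₃ : ℂ, A = M z₁ z₂ z₃}

/-- The subgroup `Γ` of matrices with Gaussian-integer entries, as a set of matrices. -/
def gammaSet : Set (Matrix (Fin 3) (Fin 3) ℂ) :=
  {A | ∃ z₁ z₂ z₃ : ℂ, IsGaussInt z₁ ∧ IsGaussInt z₂ ∧ IsGaussInt z₃ ∧ A = M z₁ z₂ z₃}

/-- The equivalence relation on `G` given by the left-multiplication action of `Γ`: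
`A ∼ B` iff `B = γ·A` for some `γ ∈ Γ`.  The Iwasawa manifold is the quotient `Γ\G`. -/
noncomputable def iwasawaSetoid : Setoid ↥heisSet where
  r A B := ∃ γ ∈ gammaSet, (B : Matrix (Fin 3) (Fin 3) ℂ) = γ * (A : Matrix (Fin 3) (Fin 3) ℂ)
  iseqv := by
    constructor
    · intro A
      exact ⟨1, ⟨0, 0, 0, gauss_zero, gauss_zero, gauss_zero, M_one.symm⟩, (one_mul _).symm⟩
    · rintro A B ⟨γ, ⟨z₁, z₂, z₃, h₁, h₂, h₃, rfl⟩, hB⟩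
      refine ⟨M (-z₁) (-z₂) (z₁ * z₂ - z₃),
        ⟨-z₁, -z₂, z₁ * z₂ - z₃, gauss_neg h₁, gauss_neg h₂,
          gauss_sub (gauss_mul h₁ h₂) h₃, rfl⟩, ?_⟩
      rw [hB, ← mul_assoc, M_mul]
      have : M (-z₁ + z₁) (-z₂ + z₂) (z₁ * z₂ - z₃ + z₃ + -z₁ * z₂) = 1 := by
        rw [show (-z₁ + z₁ : ℂ) = 0 by ring, show (-z₂ + z₂ : ℂ) = 0 by ring,
          show (z₁ * z₂ - z₃ + z₃ + -z₁ * z₂ : ℂ) = 0 by ring, M_one]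
      rw [this, one_mul]
    · rintro A B C ⟨γ, ⟨z₁, z₂, z₃, h₁, h₂, h₃, rfl⟩, hB⟩ ⟨δ, ⟨w₁, w₂, w₃, g₁, g₂, g₃, rfl⟩, hC⟩
      refine ⟨M (w₁ + z₁) (w₂ + z₂) (w₃ + z₃ + w₁ * z₂),
        ⟨w₁ + z₁, w₂ + z₂, w₃ + z₃ + w₁ * z₂, gauss_add g₁ h₁, gauss_add g₂ h₂,
          gauss_add (gauss_add g₃ h₃) (gauss_mul g₁ h₂), rfl⟩, ?_⟩
      rw [hC, hB, ← mul_assoc, M_mul]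

/-- The Gaussian lattice `ℤ[i]` as an additive subgroup of `ℂ`. -/
noncomputable def gaussLattice : AddSubgroup ℂ where
  carrier := {z | IsGaussInt z}
  zero_mem' := gauss_zero
  add_mem' := gauss_add
  neg_mem' := gauss_neg

/-- The projection `π : G → ℂ²`, `M(z₁,z₂,z₃) ↦ (z₁,z₂)` (read off the matrix entries). -/
def piMap (A : Matrix (Fin 3) (Fin 3) ℂ) : ℂ × ℂ := (A 0 1, A 1 2)

/-! Matrix multiplication makes `G` a topological group (the inverse of `M(a,b,c)` is
`M(-a,-b,ab-c)`), and `Γ` is a closed subgroup of it because `ℤ[i]` is closed in `ℂ`. The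
action of a closed subgroup by left translations is proper, and the orbit space of a proper
action is Hausdorff. -/

lemma isGaussInt_iff {z : ℂ} :
    IsGaussInt z ↔ z.re ∈ Set.range ((↑) : ℤ → ℝ) ∧ z.im ∈ Set.range ((↑) : ℤ → ℝ) := by
  constructor
  · rintro ⟨a, b, rfl⟩
    exact ⟨⟨a, by simp⟩, ⟨b, by simp⟩⟩
  · rintro ⟨⟨a, ha⟩, ⟨b, hb⟩⟩
    exact ⟨a, b, Complex.ext (by simp [ha]) (by simp [hb])⟩

lemma isClosed_setOf_isGaussInt : IsClosed {z : ℂ | IsGaussInt z} := by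
  simp only [isGaussInt_iff, Set.ofPred_and]
  exact (Real.isClosed_range_intCast.preimage continuous_re).inter
    (Real.isClosed_range_intCast.preimage continuous_im)

lemma continuous_M : Continuous fun p : ℂ × ℂ × ℂ => M p.1 p.2.1 p.2.2 := by
  refine continuous_matrix fun i j => ?_
  fin_cases i <;> fin_cases j <;> simp [M] <;> fun_prop

@[simp] lemma M_apply_zero_one (a b c : ℂ) : M a b c 0 1 = a := by simp [M]
@[simp] lemma M_apply_one_two (a b c : ℂ) : M a b c 1 2 = b := by simp [M]
@[simp] lemma M_apply_zero_two (a b c : ℂ) : M a b c 0 2 = c := by simp [M]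

lemma M_mem_heisSet (a b c : ℂ) : M a b c ∈ heisSet := ⟨a, b, c, rfl⟩

lemma eq_M_of_mem_heisSet {A : Matrix (Fin 3) (Fin 3) ℂ} (hA : A ∈ heisSet) :
    A = M (A 0 1) (A 1 2) (A 0 2) := by
  obtain ⟨a, b, c, rfl⟩ := hA
  simp

lemma mul_mem_heisSet {A B : Matrix (Fin 3) (Fin 3) ℂ} (hA : A ∈ heisSet) (hB : B ∈ heisSet) :
    A * B ∈ heisSet := by
  obtain ⟨a₁, a₂, a₃, rfl⟩ := hA
  obtain ⟨b₁, b₂, b₃, rfl⟩ := hB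
  rw [M_mul]
  exact M_mem_heisSet _ _ _

lemma M_inv_mul_M (a b c : ℂ) : M (-a) (-b) (a * b - c) * M a b c = 1 := by
  rw [M_mul, ← M_one]
  congr 1 <;> ring

def heisInv (A : Matrix (Fin 3) (Fin 3) ℂ) : Matrix (Fin 3) (Fin 3) ℂ :=
  M (-A 0 1) (-A 1 2) (A 0 1 * A 1 2 - A 0 2)

lemma continuous_heisInv : Continuous heisInv :=
  continuous_M.comp
    (f := fun A : Matrix (Fin 3) (Fin 3) ℂ => (-A 0 1, -A 1 2, A 0 1 * A 1 2 - A 0 2)) (by fun_prop)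

instance : Mul heisSet := ⟨fun A B => ⟨A * B, mul_mem_heisSet A.2 B.2⟩⟩
instance : One heisSet := ⟨⟨1, 0, 0, 0, M_one.symm⟩⟩
instance : Inv heisSet := ⟨fun A => ⟨heisInv A, M_mem_heisSet _ _ _⟩⟩

@[simp] lemma heisSet.coe_mul (A B : heisSet) :
    ((A * B : heisSet) : Matrix (Fin 3) (Fin 3) ℂ) = A * B := rfl
@[simp] lemma heisSet.coe_one : ((1 : heisSet) : Matrix (Fin 3) (Fin 3) ℂ) = 1 := rfl
@[simp] lemma heisSet.coe_inv (A : heisSet) :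
    ((A⁻¹ : heisSet) : Matrix (Fin 3) (Fin 3) ℂ) = heisInv A := rfl

noncomputable instance : Group heisSet where
  mul_assoc A B C := Subtype.ext <| by simp only [heisSet.coe_mul, Matrix.mul_assoc]
  one_mul A := Subtype.ext <| by simp only [heisSet.coe_mul, heisSet.coe_one, Matrix.one_mul]
  mul_one A := Subtype.ext <| by simp only [heisSet.coe_mul, heisSet.coe_one, Matrix.mul_one]
  inv_mul_cancel A := Subtype.ext <| by
    rw [heisSet.coe_mul, heisSet.coe_inv, heisSet.coe_one, heisInv, eq_M_of_mem_heisSet A.2]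
    simp only [M_apply_zero_one, M_apply_one_two, M_apply_zero_two, M_inv_mul_M]

instance : IsTopologicalGroup heisSet where
  continuous_mul := continuous_induced_rng.2 <|
    (continuous_subtype_val.comp continuous_fst).matrix_mul
      (continuous_subtype_val.comp continuous_snd)
  continuous_inv := continuous_induced_rng.2 (continuous_heisInv.comp continuous_subtype_val)

lemma gammaSet_subset_heisSet : gammaSet ⊆ heisSet := by
  rintro _ ⟨a, b, c, -, -, -, rfl⟩
  exact M_mem_heisSet a b c

lemma mem_gammaSet_iff {A : Matrix (Fin 3) (Fin 3) ℂ} (hA : A ∈ heisSet) :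
    A ∈ gammaSet ↔ IsGaussInt (A 0 1) ∧ IsGaussInt (A 1 2) ∧ IsGaussInt (A 0 2) := by
  constructor
  · rintro ⟨a, b, c, ha, hb, hc, rfl⟩
    simpa using ⟨ha, hb, hc⟩
  · rintro ⟨ha, hb, hc⟩
    exact ⟨_, _, _, ha, hb, hc, eq_M_of_mem_heisSet hA⟩

def gammaSubgroup : Subgroup heisSet where
  carrier := {A | (A : Matrix (Fin 3) (Fin 3) ℂ) ∈ gammaSet}
  one_mem' := ⟨0, 0, 0, gauss_zero, gauss_zero, gauss_zero, M_one.symm⟩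
  mul_mem' := by
    rintro A B ⟨a₁, a₂, a₃, ha₁, ha₂, ha₃, hA⟩ ⟨b₁, b₂, b₃, hb₁, hb₂, hb₃, hB⟩
    exact ⟨_, _, _, gauss_add ha₁ hb₁, gauss_add ha₂ hb₂,
      gauss_add (gauss_add ha₃ hb₃) (gauss_mul ha₁ hb₂), by rw [heisSet.coe_mul, hA, hB, M_mul]⟩
  inv_mem' := by
    intro A hA
    obtain ⟨h₁, h₂, h₃⟩ := (mem_gammaSet_iff A.2).1 hA
    exact ⟨_, _, _, gauss_neg h₁, gauss_neg h₂, gauss_sub (gauss_mul h₁ h₂) h₃, rfl⟩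

instance : IsClosed (gammaSubgroup : Set heisSet) := by
  let coords (A : Matrix (Fin 3) (Fin 3) ℂ) : ℂ × ℂ × ℂ := (A 0 1, A 1 2, A 0 2)
  have hcoords : Continuous coords := by fun_prop
  let S := {z : ℂ | IsGaussInt z}
  have hS : IsClosed S := isClosed_setOf_isGaussInt
  have : (gammaSubgroup : Set heisSet) = (coords ∘ Subtype.val) ⁻¹' (S ×ˢ S ×ˢ S) :=
    Set.ext fun A => mem_gammaSet_iff A.2
  rw [this]
  exact (hS.prod (hS.prod hS)).preimage (hcoords.comp continuous_subtype_val)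

lemma iwasawaSetoid_eq_orbitRel : iwasawaSetoid = MulAction.orbitRel gammaSubgroup heisSet := by
  refine Setoid.ext fun A B => ?_
  rw [Setoid.comm', MulAction.orbitRel_apply, MulAction.mem_orbit_iff]
  constructor
  · rintro ⟨γ, hγ, hB⟩
    exact ⟨⟨⟨γ, gammaSet_subset_heisSet hγ⟩, hγ⟩, Subtype.ext hB.symm⟩
  · rintro ⟨γ, rfl⟩
    exact ⟨γ, γ.2, rfl⟩

/-- The Iwasawa manifold `X = Γ\G` (the quotient of the Heisenberg group `G`,
a subspace of the 3×3 complex matrices, by the left-multiplication action of `Γ`,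
with the quotient topology) is Hausdorff. -/
theorem stmt16 : T2Space (Quotient iwasawaSetoid) := by
  rw [iwasawaSetoid_eq_orbitRel]
  exact t2Space_quotient_mulAction_of_properSMul
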